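/- Let G be a finite simple graph containing an edge uv with deg(u) + deg(v) ≤ 4, and let E′ be the set of all edges of G incident with u or with v. Then |E′| ≤ 3 and γ(G − E′) > γ(G). -/

import Mathlib

open SimpleGraph

/-- `S` is a dominating set of `G`. -/
def IsDomSet {V : Type*} (G : SimpleGraph V) (S : Finset V) : Prop :=
  ∀ v : V, v ∈ S ∨ ∃ u ∈ S, G.Adj u v

/-- The domination number `γ(G)`. -/
noncomputable def domNum {V : Type*} (G : SimpleGraph V) : ℕ :=
  sInf {n | ∃ S : Finset V, IsDomSet G S ∧ S.card = n}

/-- `C` is a vertex cover of `G`. -/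
def IsVC {V : Type*} (G : SimpleGraph V) (C : Finset V) : Prop :=
  ∀ e ∈ G.edgeSet, ∃ x ∈ C, x ∈ e

/-- The vertex cover number `τ(G)`. -/
noncomputable def tau {V : Type*} (G : SimpleGraph V) : ℕ :=
  sInf {n | ∃ C : Finset V, IsVC G C ∧ C.card = n}

/-- `S` is an independent set of `G`. -/
def IsIndep {V : Type*} (G : SimpleGraph V) (S : Finset V) : Prop :=
  ∀ a ∈ S, ∀ b ∈ S, ¬ G.Adj a b

/-- The independence number `α(G)`. -/
noncomputable def indepNum {V : Type*} (G : SimpleGraph V) : ℕ :=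
  sSup {n | ∃ S : Finset V, IsIndep G S ∧ S.card = n}

/-- The bondage number `b(G)`. -/
noncomputable def bondage {V : Type*} (G : SimpleGraph V) : ℕ :=
  sInf {n | ∃ E' : Finset (Sym2 V), ↑E' ⊆ G.edgeSet ∧ E'.card = n ∧
    domNum (G.deleteEdges ↑E') = domNum G + 1}

/-- The graph `G_v+u` obtained from `G` by adding one new vertex (`none`) adjacent only to `v`. -/
def addLeaf {V : Type*} (G : SimpleGraph V) (v : V) : SimpleGraph (Option V) :=
  SimpleGraph.fromRel (fun x y =>
    (∃ a b, x = some a ∧ y = some b ∧ G.Adj a b) ∨ (x = some v ∧ y = none))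

/-- The graph `G_A+` obtained from `G` by adding, for each `v ∈ A`, one new pendant
vertex adjacent only to `v`. -/
def addLeaves {V : Type*} (G : SimpleGraph V) (A : Finset V) :
    SimpleGraph (V ⊕ {x // x ∈ A}) :=
  SimpleGraph.fromRel (fun x y =>
    (∃ a b, x = Sum.inl a ∧ y = Sum.inl b ∧ G.Adj a b) ∨
    (∃ a : {x // x ∈ A}, x = Sum.inl a.1 ∧ y = Sum.inr a))

/-- The `3`-subdivision of the edge `uv` of `G`: the edge `uv` is deleted, three new
vertices `u' = Sum.inr 0`, `w = Sum.inr 1`, `v' = Sum.inr 2` are added, together with the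
four edges `u u'`, `u' w`, `w v'`, `v' v`. -/
def subdiv3 {V : Type*} (G : SimpleGraph V) (u v : V) : SimpleGraph (V ⊕ Fin 3) :=
  SimpleGraph.fromRel (fun x y =>
    match x, y with
    | Sum.inl a, Sum.inl b => G.Adj a b ∧ s(a, b) ≠ s(u, v)
    | Sum.inl a, Sum.inr i => (a = u ∧ i = 0) ∨ (a = v ∧ i = 2)
    | Sum.inr i, Sum.inr j => (i = 0 ∧ j = 1) ∨ (i = 1 ∧ j = 2)
    | _, _ => False)

/-
If `D` is a minimum dominating set of `G − E'`, then the isolated vertices `u` and `v` both lie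
in `D`, and `D ∖ {v}` dominates `G`: `v` is dominated by its neighbour `u`, and every other vertex
is dominated in `G − E' ≤ G` by a vertex of `D` other than the isolated `v`. The bound on `|E'|`
is inclusion–exclusion, the edge `uv` being counted in both degrees.
-/

namespace SimpleGraph

variable {V : Type*}

theorem card_edgeFinset_filter_mem_or_mem_add_one [Fintype V] [DecidableEq V]
    (G : SimpleGraph V) [DecidableRel G.Adj] {u v : V} (huv : G.Adj u v) :
    (G.edgeFinset.filter (fun e => u ∈ e ∨ v ∈ e)).card + 1 = G.degree u + G.degree v := by
  have hunion : G.edgeFinset.filter (fun e => u ∈ e ∨ v ∈ e) =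
      G.incidenceFinset u ∪ G.incidenceFinset v := by
    ext e
    simp [incidenceSet, and_or_left]
  have hinter : G.incidenceFinset u ∩ G.incidenceFinset v = {s(u, v)} := by
    rw [← Finset.coe_inj, Finset.coe_inter, coe_incidenceFinset, coe_incidenceFinset,
      G.incidenceSet_inter_incidenceSet_of_adj huv, Finset.coe_singleton]
  rw [hunion, ← card_incidenceFinset_eq_degree, ← card_incidenceFinset_eq_degree,
    ← Finset.card_union_add_card_inter, hinter, Finset.card_singleton]

theorem not_adj_deleteEdges_incident [DecidableEq V] (G : SimpleGraph V) [Fintype G.edgeSet]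
    (u v w : V) :
    ¬ (G.deleteEdges ↑(G.edgeFinset.filter (fun e => u ∈ e ∨ v ∈ e))).Adj u w ∧
    ¬ (G.deleteEdges ↑(G.edgeFinset.filter (fun e => u ∈ e ∨ v ∈ e))).Adj v w := by
  simp +contextual [deleteEdges_adj]

end SimpleGraph

section Domination

variable {V : Type*} {G H : SimpleGraph V} {S : Finset V}

theorem domNum_le_card (hS : IsDomSet G S) : domNum G ≤ S.card :=
  Nat.sInf_le ⟨S, hS, rfl⟩

theorem exists_isDomSet_card_eq_domNum [Fintype V] (G : SimpleGraph V) :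
    ∃ S : Finset V, IsDomSet G S ∧ S.card = domNum G :=
  Nat.sInf_mem (s := {n | ∃ S : Finset V, IsDomSet G S ∧ S.card = n})
    ⟨_, Finset.univ, fun w => Or.inl (Finset.mem_univ w), rfl⟩

theorem IsDomSet.mem_of_isolated (hS : IsDomSet G S) {v : V} (hv : ∀ w, ¬ G.Adj v w) :
    v ∈ S :=
  (hS v).resolve_right fun ⟨_, _, hadj⟩ => hv _ hadj.symm

theorem IsDomSet.erase_of_le [DecidableEq V] (hS : IsDomSet H S) (hHG : H ≤ G) {u v : V}
    (huv : G.Adj u v) (hu : u ∈ S) (hv : ∀ w, ¬ H.Adj v w) : IsDomSet G (S.erase v) := by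
  intro w
  rcases hS w with hw | ⟨d, hd, hdw⟩
  · by_cases hwv : w = v
    · exact Or.inr ⟨u, Finset.mem_erase.2 ⟨huv.ne, hu⟩, hwv ▸ huv⟩
    · exact Or.inl (Finset.mem_erase.2 ⟨hwv, hw⟩)
  · have hdv : d ≠ v := by
      rintro rfl
      exact hv w hdw
    exact Or.inr ⟨d, Finset.mem_erase.2 ⟨hdv, hd⟩, hHG hdw⟩

theorem domNum_lt_of_le_of_isolated [Fintype V] (hHG : H ≤ G) {u v : V} (huv : G.Adj u v)
    (hu : ∀ w, ¬ H.Adj u w) (hv : ∀ w, ¬ H.Adj v w) : domNum G < domNum H := by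
  classical
  obtain ⟨D, hD, hDcard⟩ := exists_isDomSet_card_eq_domNum H
  calc domNum G ≤ (D.erase v).card :=
        domNum_le_card (hD.erase_of_le hHG huv (hD.mem_of_isolated hu) hv)
    _ < D.card := Finset.card_erase_lt_of_mem (hD.mem_of_isolated hv)
    _ = domNum H := hDcard

end Domination

/-- If `uv` is an edge with `deg(u) + deg(v) ≤ 4` and `E'` is the set of edges incident
with `u` or `v`, then `|E'| ≤ 3` and `γ(G − E') > γ(G)`. -/
theorem stmt4 {V : Type*} [Fintype V] [DecidableEq V] (G : SimpleGraph V)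
    [DecidableRel G.Adj] (u v : V) (huv : G.Adj u v)
    (hdeg : G.degree u + G.degree v ≤ 4) :
    (G.edgeFinset.filter (fun e => u ∈ e ∨ v ∈ e)).card ≤ 3 ∧
    domNum G < domNum (G.deleteEdges ↑(G.edgeFinset.filter (fun e => u ∈ e ∨ v ∈ e))) := by
  refine ⟨?_, domNum_lt_of_le_of_isolated (deleteEdges_le _) huv
    (fun w => (not_adj_deleteEdges_incident G u v w).1)
    (fun w => (not_adj_deleteEdges_incident G u v w).2)⟩
  have hcard := G.card_edgeFinset_filter_mem_or_mem_add_one huv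
  omega
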